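/- arXiv:1710.10592 — 2 statements merged into one kernel-verified Lean document; each statement's English description precedes it below -/
import Mathlib

section
/- Consider a star graph on n+1 vertices with center v, where every edge has weight 1 and each edge is realized independently with probability p ∈ (0,1). The expected weight of the maximum realized matching is 1 − (1−p)ⁿ. Moreover, for any subset Q of k edges, the expected weight of the maximum realized matching within Q is 1 − (1−p)^k; hence to guarantee expected matching weight at least (1−ε)·(1−(1−p)ⁿ) for all large n, one must query at least log(1/ε)/log(1/(1−p)) = Ω(log(1/ε)/p) edges. -/
open Finset

/-- in a star with unit weight edges, each realized independently
with probability `p`, the expected weight of the maximum realized matching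
among any `n` of the edges is `1 - (1-p)^n` (a matching in a star has at most
one edge, realized iff some queried edge is realized); consequently, a budget
of `k` queried edges guaranteeing a `(1-ε)` fraction of `1 - (1-p)^n` for all
`n` must satisfy `k ≥ log(1/ε) / log(1/(1-p))`. -/
theorem star_graph_query_lower_bound (p ε : ℝ)
    (hp : 0 < p) (hp1 : p < 1) (hε : 0 < ε) (hε1 : ε < 1) :
    (∀ n : ℕ, ∑ S ∈ (univ : Finset (Fin n)).powerset,
        p ^ S.card * (1 - p) ^ (n - S.card) * (if S.Nonempty then (1 : ℝ) else 0)
      = 1 - (1 - p) ^ n) ∧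
    (∀ k : ℕ,
      (∀ n : ℕ, 1 - (1 - p) ^ k ≥ (1 - ε) * (1 - (1 - p) ^ n)) →
      (k : ℝ) ≥ Real.log (1 / ε) / Real.log (1 / (1 - p))) := by
  constructor
  · intro n
    have h1 : ∀ S ∈ (univ : Finset (Fin n)).powerset,
        p ^ S.card * (1 - p) ^ (n - S.card) * (if S.Nonempty then (1 : ℝ) else 0)
        = p ^ S.card * (1 - p) ^ (n - S.card)
          - (if S = ∅ then (1 - p) ^ n else 0) := by
      intro S _
      by_cases hS : S = ∅
      · simp [hS, Finset.not_nonempty_empty]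
      · simp [hS, Finset.nonempty_iff_ne_empty.mpr hS]
    rw [Finset.sum_congr rfl h1, Finset.sum_sub_distrib]
    have h2 : (∑ S ∈ (univ : Finset (Fin n)).powerset,
        p ^ S.card * (1 - p) ^ (n - S.card)) = 1 := by
      rw [Finset.powerset_univ]
      have := Fin.sum_pow_mul_eq_add_pow (n := n) p (1 - p)
      simpa using this
    have h3 : (∑ S ∈ (univ : Finset (Fin n)).powerset,
        (if S = ∅ then ((1 - p) ^ n : ℝ) else 0)) = (1 - p) ^ n := by
      rw [Finset.sum_ite_eq' _ ∅ (fun _ => ((1 - p) ^ n : ℝ))]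
      simp
    rw [h2, h3]
  · intro k hk
    have h1p : (0:ℝ) < 1 - p := by linarith
    have h1p1 : (1:ℝ) - p < 1 := by linarith
    -- (1-p)^k ≤ ε
    have hlim : Filter.Tendsto (fun n : ℕ => (1 - ε) * (1 - (1 - p) ^ n))
        Filter.atTop (nhds ((1 - ε) * (1 - 0))) := by
      exact (tendsto_const_nhds.sub
        (tendsto_pow_atTop_nhds_zero_of_lt_one (le_of_lt h1p) h1p1)).const_mul _
    have hge : (1 - ε) * (1 - 0) ≤ 1 - (1 - p) ^ k :=
      le_of_tendsto hlim (Filter.Eventually.of_forall hk)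
    have hq : (1 - p) ^ k ≤ ε := by nlinarith
    have hlogpos : 0 < Real.log (1 / (1 - p)) := by
      rw [Real.log_div one_ne_zero (ne_of_gt h1p), Real.log_one]
      have : Real.log (1 - p) < 0 := Real.log_neg h1p h1p1
      linarith
    rw [ge_iff_le, div_le_iff₀ hlogpos]
    have hlog : Real.log ((1 - p) ^ k) ≤ Real.log ε :=
      Real.log_le_log (pow_pos h1p k) hq
    rw [Real.log_pow] at hlog
    rw [Real.log_div one_ne_zero (ne_of_gt hε), Real.log_one,
      Real.log_div one_ne_zero (ne_of_gt h1p), Real.log_one]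
    nlinarith
end

section
/- Let C be an alternating path of 2m+1 edges (h₁, l₁, h₂, l₂, …, h_{m+1}) whose odd-position edges h_j belong to M_H. For an integer k with 1 ≤ k ≤ m+1 and each i ∈ {1,…,k}, let D_i = {h_j : j ≡ i (mod k)}. Then the D_i are pairwise disjoint, their union is {h₁,…,h_{m+1}}, and removing the edges of any single D_i from C splits C into connected subpaths each containing at most 2k edges. -/
open Finset

/-- in an alternating path with `2m+1` edges
`(h₁, l₁, h₂, l₂, …, h_{m+1})`, where the heavy edge `h_j` occupies position
`2(j-1)`, the classes `D i = {h_j : j ≡ i (mod k)}` (for `i ∈ {1,…,k}`) are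
pairwise disjoint, cover all heavy edges, and removing any single `D i` splits
the path into subpaths of at most `2k` edges each (here: any interval of
positions avoiding `D i` has at most `2k` positions). -/
theorem heavy_residue_classes_split_path (m k : ℕ) (hk1 : 1 ≤ k) (hk2 : k ≤ m + 1) :
    let D : ℕ → Finset ℕ := fun i =>
      ((Finset.range (m + 1)).filter (fun j => (j + 1) % k = i % k)).image (fun j => 2 * j)
    (∀ i₁ ∈ Finset.Icc 1 k, ∀ i₂ ∈ Finset.Icc 1 k, i₁ ≠ i₂ → Disjoint (D i₁) (D i₂)) ∧
    ((Finset.Icc 1 k).biUnion D = (Finset.range (m + 1)).image (fun j => 2 * j)) ∧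
    (∀ i ∈ Finset.Icc 1 k, ∀ a b : ℕ, a ≤ b → b < 2 * m + 1 →
      (∀ x ∈ Finset.Icc a b, x ∉ D i) → b + 1 - a ≤ 2 * k) := by
  intro D
  have key : ∀ i₁ i₂, 1 ≤ i₁ → i₁ ≤ k → 1 ≤ i₂ → i₂ ≤ k → i₁ % k = i₂ % k → i₁ = i₂ := by
    intro i₁ i₂ h1 h2 h3 h4 h
    rcases eq_or_lt_of_le h2 with rfl | h2
    · rcases eq_or_lt_of_le h4 with rfl | h4
      · rfl
      · rw [Nat.mod_self, Nat.mod_eq_of_lt h4] at h; omega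
    · rcases eq_or_lt_of_le h4 with rfl | h4
      · rw [Nat.mod_self, Nat.mod_eq_of_lt h2] at h; omega
      · rw [Nat.mod_eq_of_lt h2, Nat.mod_eq_of_lt h4] at h; omega
  refine ⟨?_, ?_, ?_⟩
  · intro i₁ hi₁ i₂ hi₂ hne
    simp only [mem_Icc] at hi₁ hi₂
    rw [Finset.disjoint_left]
    intro x hx hx2
    simp only [D, mem_image, mem_filter, mem_range] at hx hx2
    obtain ⟨j1, ⟨_, h1⟩, e1⟩ := hx
    obtain ⟨j2, ⟨_, h2⟩, e2⟩ := hx2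
    have hj : j1 = j2 := by omega
    exact hne (key i₁ i₂ hi₁.1 hi₁.2 hi₂.1 hi₂.2 (by rw [← h1, hj, h2]))
  · ext x
    simp only [mem_biUnion, mem_Icc, D, mem_image, mem_filter, mem_range]
    constructor
    · rintro ⟨i, _, j, ⟨hj, _⟩, rfl⟩; exact ⟨j, hj, rfl⟩
    · rintro ⟨j, hj, rfl⟩
      by_cases h : (j + 1) % k = 0
      · exact ⟨k, ⟨hk1, le_refl k⟩, j, ⟨hj, by rw [h, Nat.mod_self]⟩, rfl⟩
      · refine ⟨(j + 1) % k, ⟨by omega, le_of_lt (Nat.mod_lt _ hk1)⟩, j, ⟨hj, ?_⟩, rfl⟩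
        exact (Nat.mod_mod_of_dvd _ dvd_rfl).symm
  · intro i hi a b hab hb hav
    by_contra hcon
    push_neg at hcon
    have hba : a + 2 * k ≤ b := by omega
    set j0 := (a + 1) / 2 with hj0
    have h2j0 : a ≤ 2 * j0 ∧ 2 * j0 ≤ a + 1 := by omega
    set r := (j0 + 1) % k with hr
    have hrk : r < k := Nat.mod_lt _ hk1
    set t := (i % k + k - r) % k with ht
    have htk : t < k := Nat.mod_lt _ hk1
    have hmod : (j0 + t + 1) % k = i % k := by
      have e1 : (j0 + t + 1) % k = (r + t) % k := by
        rw [show j0 + t + 1 = (j0 + 1) + t by ring, hr, Nat.mod_add_mod]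
      rw [e1, ht, Nat.add_mod_mod, show r + (i % k + k - r) = i % k + k by omega,
        Nat.add_mod_right, Nat.mod_mod_of_dvd _ dvd_rfl]
    have hjm : j0 + t < m + 1 := by omega
    have hmem : 2 * (j0 + t) ∈ D i := by
      simp only [D, mem_image, mem_filter, mem_range]
      exact ⟨j0 + t, ⟨hjm, hmod⟩, rfl⟩
    exact hav (2 * (j0 + t)) (mem_Icc.mpr ⟨by omega, by omega⟩) hmem
end
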